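/- Let X be a Banach space, let A : X → X be a compact continuous linear operator such that I − A is bijective with continuous inverse, and let (A_n) be a collectively compact sequence of continuous linear operators on X with A_n x → A x for every x ∈ X. Then there exist a constant C > 0 and an index N such that for every n ≥ N the operator I − A_n is bijective with continuous inverse, and whenever y, y_n, f, f_n ∈ X satisfy y − A y = f and y_n − A_n y_n = f_n, one has ‖y_n − y‖ ≤ C·(‖(A_n − A) y‖ + ‖f_n − f‖). -/

import Mathlib

/-! Anselone's argument. Since `B (1 - A) = 1 = (1 - A) B`, the operator `Sₙ = 1 + B Aₙ` satisfies
`Sₙ (1 - Aₙ) = 1 - B (Aₙ - A) Aₙ` and `(1 - Aₙ) Sₙ = 1 - (Aₙ - A) B Aₙ`. By Banach–Steinhaus,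
`Aₙ - A → 0` uniformly on compact sets, and `(Aₙ)`, `(B Aₙ)` map the unit ball into a fixed
compact set, so both defects tend to zero in operator norm. For large `n` a Neumann series then
inverts `1 - Aₙ` with inverse of norm at most `2 ‖Sₙ‖ ≤ 2 (1 + ‖B‖ supₖ ‖Aₖ‖)`, and the estimate
follows from `(1 - Aₙ) (yₙ - y) = fₙ - f + (Aₙ - A) y`. -/
open Filter Topology Bornology

def CollectivelyCompact {𝕜 E F ι : Type*} [NontriviallyNormedField 𝕜]
    [SeminormedAddCommGroup E] [NormedSpace 𝕜 E] [SeminormedAddCommGroup F] [NormedSpace 𝕜 F]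
    (T : ι → E →L[𝕜] F) : Prop :=
  ∀ U : Set E, IsBounded U → IsCompact (closure (⋃ i, T i '' U))

section CollectivelyCompact

variable {𝕜 E F G ι : Type*} [RCLike 𝕜]
  [NormedAddCommGroup E] [NormedSpace 𝕜 E]
  [NormedAddCommGroup F] [NormedSpace 𝕜 F]
  [NormedAddCommGroup G] [NormedSpace 𝕜 G]

theorem CollectivelyCompact.comp_left {T : ι → E →L[𝕜] F} (hT : CollectivelyCompact T)
    (B : F →L[𝕜] G) : CollectivelyCompact fun i ↦ B.comp (T i) := by
  intro U hU
  refine ((hT U hU).image B.continuous).closure_of_subset ?_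
  simp only [ContinuousLinearMap.coe_comp, Set.image_comp, ← Set.image_iUnion]
  exact Set.image_mono subset_closure

theorem ContinuousLinearMap.tendstoUniformlyOn_of_tendsto [CompleteSpace E]
    {g : ℕ → E →L[𝕜] F} {f : E →L[𝕜] F} (h : ∀ x, Tendsto (fun n ↦ g n x) atTop (𝓝 (f x)))
    {K : Set E} (hK : IsCompact K) :
    TendstoUniformlyOn (fun n ↦ ⇑(g n)) f atTop K := by
  have hg : UniformEquicontinuous ((↑) ∘ g : ℕ → E → F) :=
    PolynormableSpace.banach_steinhaus (𝕜₂ := 𝕜) fun x ↦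
      (NormedSpace.isVonNBounded_iff 𝕜).2 (Metric.isBounded_range_of_tendsto _ (h x))
  have := (EquicontinuousOn.tendsto_uniformOnFun_iff_pi (𝔖 := {K | IsCompact K}) (fun _ hK ↦ hK)
    (Set.sUnion_eq_univ_iff.2 fun x ↦ ⟨{x}, isCompact_singleton, rfl⟩)
    (fun _ _ ↦ hg.equicontinuous.equicontinuousOn _) atTop f).2 (tendsto_pi_nhds.2 h)
  exact UniformOnFun.tendsto_iff_tendstoUniformlyOn.1 this K hK

theorem CollectivelyCompact.tendsto_comp_of_tendsto_zero [CompleteSpace F]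
    {T : ℕ → E →L[𝕜] F} (hT : CollectivelyCompact T) {P : ℕ → F →L[𝕜] G}
    (hP : ∀ x, Tendsto (fun n ↦ P n x) atTop (𝓝 0)) :
    Tendsto (fun n ↦ (P n).comp (T n)) atTop (𝓝 0) := by
  set K := closure (⋃ n, T n '' Metric.closedBall (0 : E) 1)
  have hunif := ContinuousLinearMap.tendstoUniformlyOn_of_tendsto (f := 0) hP
    (hT _ Metric.isBounded_closedBall : IsCompact K)
  refine NormedAddGroup.tendsto_nhds_zero.2 fun ε hε ↦ ?_
  filter_upwards [Metric.tendstoUniformlyOn_iff.1 hunif (ε / 2) (half_pos hε)] with n hn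
  refine (ContinuousLinearMap.opNorm_le_of_unit_norm (half_pos hε).le fun x hx ↦ ?_).trans_lt
    (half_lt_self hε)
  have hTx : T n x ∈ K := subset_closure (Set.mem_iUnion.2 ⟨n, x, by simp [hx.le], rfl⟩)
  simpa using (hn _ hTx).le

end CollectivelyCompact

section NormedRing

variable {R : Type*} [NormedRing R]

theorem one_add_mul_mul_one_sub {a b : R} (h : b * (1 - a) = 1) (c : R) :
    (1 + b * c) * (1 - c) = 1 - b * ((c - a) * c) := by
  calc (1 + b * c) * (1 - c) = 1 - b * ((c - a) * c) + (b * (1 - a) * c - c) := by noncomm_ring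
    _ = 1 - b * ((c - a) * c) := by rw [h, one_mul, sub_self, add_zero]

theorem one_sub_mul_one_add_mul {a b : R} (h : (1 - a) * b = 1) (c : R) :
    (1 - c) * (1 + b * c) = 1 - (c - a) * (b * c) := by
  calc (1 - c) * (1 + b * c) = 1 - (c - a) * (b * c) + ((1 - a) * b * c - c) := by noncomm_ring
    _ = 1 - (c - a) * (b * c) := by rw [h, one_mul, sub_self, add_zero]

theorem norm_le_div_of_one_sub_mul_eq_one {d w : R} (h : (1 - d) * w = 1) (hd : ‖d‖ < 1) :
    ‖w‖ ≤ ‖(1 : R)‖ / (1 - ‖d‖) := by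
  have hw : w = 1 + d * w := by rw [← h]; noncomm_ring
  have : ‖w‖ ≤ ‖(1 : R)‖ + ‖d‖ * ‖w‖ := calc
    ‖w‖ = ‖1 + d * w‖ := congrArg _ hw
    _ ≤ ‖(1 : R)‖ + ‖d‖ * ‖w‖ := (norm_add_le _ _).trans (add_le_add_right (norm_mul_le _ _) _)
  rw [le_div_iff₀ (sub_pos.2 hd)]
  linarith

theorem exists_inverse_of_mul_eq_one_sub [CompleteSpace R] {x s d e : R}
    (hxs : x * s = 1 - d) (hsx : s * x = 1 - e) (hd : ‖d‖ < 1) (he : ‖e‖ < 1) :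
    ∃ y, y * x = 1 ∧ x * y = 1 ∧ ‖y‖ ≤ ‖s‖ * (‖(1 : R)‖ / (1 - ‖d‖)) := by
  set w : R := ↑(Units.oneSub d hd)⁻¹
  set v : R := ↑(Units.oneSub e he)⁻¹
  have hw : (1 - d) * w = 1 := (Units.oneSub d hd).mul_inv
  have hv : v * (1 - e) = 1 := (Units.oneSub e he).inv_mul
  have hright : x * (s * w) = 1 := by rw [← mul_assoc, hxs, hw]
  have hleft : (v * s) * x = 1 := by rw [mul_assoc, hsx, hv]
  refine ⟨s * w, ?_, hright, ?_⟩
  · rwa [← left_inv_eq_right_inv hleft hright]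
  · exact (norm_mul_le _ _).trans (mul_le_mul_of_nonneg_left
      (norm_le_div_of_one_sub_mul_eq_one hw hd) (norm_nonneg _))

end NormedRing

section Operator

variable {𝕜 E : Type*} [NontriviallyNormedField 𝕜] [NormedAddCommGroup E] [NormedSpace 𝕜 E]

theorem ContinuousLinearMap.exists_inverse_one_sub_of_approx [CompleteSpace E]
    {A B T : E →L[𝕜] E} (hB₁ : B * (1 - A) = 1) (hB₂ : (1 - A) * B = 1)
    (hd : ‖(T - A) * (B * T)‖ ≤ 1 / 2) (he : ‖B * ((T - A) * T)‖ < 1) :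
    ∃ R, R * (1 - T) = 1 ∧ (1 - T) * R = 1 ∧ ‖R‖ ≤ 2 * (1 + ‖B‖ * ‖T‖) := by
  obtain ⟨R, hRl, hRr, hR⟩ := exists_inverse_of_mul_eq_one_sub
    (one_sub_mul_one_add_mul hB₂ T) (one_add_mul_mul_one_sub hB₁ T)
    (hd.trans_lt one_half_lt_one) he
  have hone : ‖(1 : E →L[𝕜] E)‖ ≤ 1 := norm_id_le
  have hs : ‖1 + B * T‖ ≤ 1 + ‖B‖ * ‖T‖ :=
    (norm_add_le _ _).trans (add_le_add hone (norm_mul_le _ _))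
  have hw : ‖(1 : E →L[𝕜] E)‖ / (1 - ‖(T - A) * (B * T)‖) ≤ 2 := by
    rw [div_le_iff₀ (by linarith)]
    linarith
  refine ⟨R, hRl, hRr, hR.trans ?_⟩
  rw [mul_comm 2]
  exact mul_le_mul hs hw (div_nonneg (norm_nonneg _) (by linarith)) (by positivity)

theorem ContinuousLinearMap.norm_sub_le_of_mul_one_sub_eq_one {A T R : E →L[𝕜] E}
    (hR : R * (1 - T) = 1) {y yn f fn : E} (hy : y - A y = f) (hyn : yn - T yn = fn) :
    ‖yn - y‖ ≤ ‖R‖ * (‖(T - A) y‖ + ‖fn - f‖) := by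
  have hdiff : (1 - T) (yn - y) = fn - f + (T - A) y := by
    simp only [← hy, ← hyn, sub_apply, one_apply_eq_self, map_sub]
    abel
  calc ‖yn - y‖ = ‖R ((1 - T) (yn - y))‖ := by rw [← mul_apply_eq_comp, hR, one_apply_eq_self]
    _ ≤ ‖R‖ * ‖fn - f + (T - A) y‖ := by rw [hdiff]; exact R.le_opNorm _
    _ ≤ ‖R‖ * (‖(T - A) y‖ + ‖fn - f‖) := by
      rw [add_comm (‖_‖)]; exact mul_le_mul_of_nonneg_left (norm_add_le _ _) (norm_nonneg _)

end Operator

theorem stmt_13_general {X : Type*} [NormedAddCommGroup X] [NormedSpace ℝ X]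
    [CompleteSpace X]
    (A : X →L[ℝ] X)
    (B : X →L[ℝ] X)
    (hB₁ : B.comp (1 - A) = 1) (hB₂ : (1 - A).comp B = 1)
    (An : ℕ → X →L[ℝ] X)
    (hcc : ∀ U : Set X, IsBounded U → IsCompact (closure (⋃ n, An n '' U)))
    (hlim : ∀ x : X, Tendsto (fun n => An n x) atTop (𝓝 (A x))) :
    ∃ C > (0 : ℝ), ∃ N : ℕ, ∀ n ≥ N,
      Function.Bijective ((1 - An n : X →L[ℝ] X)) ∧
      (∃ Bn : X →L[ℝ] X, Bn.comp (1 - An n) = 1 ∧ (1 - An n).comp Bn = 1) ∧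
      ∀ y yn f fn : X, y - A y = f → yn - An n yn = fn →
        ‖yn - y‖ ≤ C * (‖(An n - A) y‖ + ‖fn - f‖) := by
  obtain ⟨M, hM⟩ : ∃ M, ∀ n, ‖An n‖ ≤ M := banach_steinhaus fun x ↦
    let ⟨C, hC⟩ := (hlim x).norm.bddAbove_range; ⟨C, fun n ↦ hC ⟨n, rfl⟩⟩
  have hM0 : 0 ≤ M := (norm_nonneg _).trans (hM 0)
  have hcc : CollectivelyCompact An := hcc
  have hdiff (x : X) : Tendsto (fun n ↦ (An n - A) x) atTop (𝓝 0) := by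
    simpa using (hlim x).sub_const (A x)
  have hright := NormedAddGroup.tendsto_nhds_zero.1
    ((hcc.comp_left B).tendsto_comp_of_tendsto_zero hdiff) (1 / 2) one_half_pos
  have hleft := NormedAddGroup.tendsto_nhds_zero.1
    (by simpa only [mul_zero] using (hcc.tendsto_comp_of_tendsto_zero hdiff).const_mul B) 1 one_pos
  obtain ⟨N, hN⟩ := eventually_atTop.1 (hright.and hleft)
  refine ⟨2 * (1 + ‖B‖ * M), by positivity, N, fun n hn ↦ ?_⟩
  obtain ⟨hd, he⟩ : ‖(An n - A) * (B * An n)‖ < 1 / 2 ∧ ‖B * ((An n - A) * An n)‖ < 1 :=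
    hN n hn
  obtain ⟨R, hRl, hRr, hR⟩ :=
    ContinuousLinearMap.exists_inverse_one_sub_of_approx hB₁ hB₂ hd.le he
  have hRC : ‖R‖ ≤ 2 * (1 + ‖B‖ * M) := hR.trans (by gcongr; exact hM n)
  refine ⟨Function.bijective_iff_has_inverse.2 ⟨R, fun x ↦ congr($hRl x), fun x ↦ congr($hRr x)⟩,
    ⟨R, hRl, hRr⟩, fun y yn f fn hy hyn ↦ ?_⟩
  exact (ContinuousLinearMap.norm_sub_le_of_mul_one_sub_eq_one hRl hy hyn).trans
    (mul_le_mul_of_nonneg_right hRC (by positivity))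

/-- with `A` compact, `I - A` bijective with continuous inverse
`B`, `(A_n)` collectively compact and `A_n → A` pointwise, there exist `C > 0`
and `N` such that for all `n ≥ N` the operator `I - A_n` is bijective with a
continuous linear inverse, and whenever `y - A y = f` and `y_n - A_n y_n = f_n`
one has `‖y_n - y‖ ≤ C (‖(A_n - A) y‖ + ‖f_n - f‖)`. -/
theorem stmt_13 {X : Type*} [NormedAddCommGroup X] [NormedSpace ℝ X]
    [CompleteSpace X]
    (A : X →L[ℝ] X)
    (hAcomp : ∀ U : Set X, IsBounded U → IsCompact (closure (A '' U)))
    (B : X →L[ℝ] X)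
    (hB₁ : B.comp (1 - A) = 1) (hB₂ : (1 - A).comp B = 1)
    (An : ℕ → X →L[ℝ] X)
    (hcc : ∀ U : Set X, IsBounded U → IsCompact (closure (⋃ n, An n '' U)))
    (hlim : ∀ x : X, Tendsto (fun n => An n x) atTop (𝓝 (A x))) :
    ∃ C > (0 : ℝ), ∃ N : ℕ, ∀ n ≥ N,
      Function.Bijective ((1 - An n : X →L[ℝ] X)) ∧
      (∃ Bn : X →L[ℝ] X, Bn.comp (1 - An n) = 1 ∧ (1 - An n).comp Bn = 1) ∧
      ∀ y yn f fn : X, y - A y = f → yn - An n yn = fn →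
        ‖yn - y‖ ≤ C * (‖(An n - A) y‖ + ‖fn - f‖) :=
  stmt_13_general A B hB₁ hB₂ An hcc hlim
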